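/- arXiv:1205.1596 — 4 statements merged into one kernel-verified Lean document; each statement's English description precedes it below -/
import Mathlib

section
/- Let m ≥ 7, let h = (1,2,3,...,m) be the m-cycle in Sym(m), and let g ∈ Sym(m) be any permutation containing the 3-cycle (1,3,m) and fixing the points 2,4,5,6,m-3,m-2,m-1. Then the permutation [h,(h^g)^{-1}][h,h^g] maps 1↦m↦5↦3↦m-1↦4↦2↦1, i.e., it contains the 7-cycle (1,m,5,3,m-1,4,2). -/
/-- Points 1,…,m are encoded as indices `0,…,m-1 : Fin m`.
`h` is the m-cycle (1,2,…,m) (as a function on indices, `h i = i+1 mod m`), and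
`g` contains the cycle (1,3,m) and fixes 2,4,5,6,m-3,m-2,m-1.
In the paper permutations act on the right (ω^{xy} = (ω^x)^y), so the paper's
element h^g = g⁻¹hg corresponds to the Lean permutation `g * h * g⁻¹`, and the
paper's product w₁⋯w₈ corresponds to the Lean product w₈ * ⋯ * w₁.  Hence the
paper permutation π = [h,(h^g)⁻¹][h,h^g] = h⁻¹·b·h·b⁻¹·h⁻¹·b⁻¹·h·b (with
b = h^g) is, as a function, the Lean permutation
`b * h * b⁻¹ * h⁻¹ * b⁻¹ * h * b * h⁻¹` with `b = g * h * g⁻¹`.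
Conclusion: π realises the 7-cycle (1,m,5,3,m-1,4,2), i.e. on indices
0 ↦ m-1 ↦ 4 ↦ 2 ↦ m-2 ↦ 3 ↦ 1 ↦ 0. -/
theorem stmt_3 (m : ℕ) (hm : 7 ≤ m) (h g : Equiv.Perm (Fin m))
    (hh : ∀ i : Fin m, (h i : ℕ) = ((i : ℕ) + 1) % m)
    (hg0 : g ⟨0, by omega⟩ = ⟨2, by omega⟩)
    (hg2 : g ⟨2, by omega⟩ = ⟨m - 1, by omega⟩)
    (hgm : g ⟨m - 1, by omega⟩ = ⟨0, by omega⟩)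
    (hfix1 : g ⟨1, by omega⟩ = ⟨1, by omega⟩)
    (hfix3 : g ⟨3, by omega⟩ = ⟨3, by omega⟩)
    (hfix4 : g ⟨4, by omega⟩ = ⟨4, by omega⟩)
    (hfix5 : g ⟨5, by omega⟩ = ⟨5, by omega⟩)
    (hfixm4 : g ⟨m - 4, by omega⟩ = ⟨m - 4, by omega⟩)
    (hfixm3 : g ⟨m - 3, by omega⟩ = ⟨m - 3, by omega⟩)
    (hfixm2 : g ⟨m - 2, by omega⟩ = ⟨m - 2, by omega⟩) :
    let b : Equiv.Perm (Fin m) := g * h * g⁻¹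
    let π : Equiv.Perm (Fin m) := b * h * b⁻¹ * h⁻¹ * b⁻¹ * h * b * h⁻¹
    π ⟨0, by omega⟩ = ⟨m - 1, by omega⟩ ∧
    π ⟨m - 1, by omega⟩ = ⟨4, by omega⟩ ∧
    π ⟨4, by omega⟩ = ⟨2, by omega⟩ ∧
    π ⟨2, by omega⟩ = ⟨m - 2, by omega⟩ ∧
    π ⟨m - 2, by omega⟩ = ⟨3, by omega⟩ ∧
    π ⟨3, by omega⟩ = ⟨1, by omega⟩ ∧
    π ⟨1, by omega⟩ = ⟨0, by omega⟩ := by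
  intro b π
  have l0 : 0 < m := by omega
  have l1 : 1 < m := by omega
  have l2 : 2 < m := by omega
  have l3 : 3 < m := by omega
  have l4 : 4 < m := by omega
  have l5 : 5 < m := by omega
  have lm4 : m - 4 < m := by omega
  have lm3 : m - 3 < m := by omega
  have lm2 : m - 2 < m := by omega
  have lm1 : m - 1 < m := by omega
  have hb : b = g * h * g⁻¹ := rfl
  have hπ : π = b * h * b⁻¹ * h⁻¹ * b⁻¹ * h * b * h⁻¹ := rfl
  clear_value b π
  have πapp : ∀ x, π x = b (h (b⁻¹ (h⁻¹ (b⁻¹ (h (b (h⁻¹ x))))))) := by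
    intro x; rw [hπ]; simp only [Equiv.Perm.mul_apply]
  have bapp : ∀ x, b x = g (h (g⁻¹ x)) := by
    intro x; rw [hb]; simp only [Equiv.Perm.mul_apply]
  have binvapp : ∀ x, b⁻¹ x = g (h⁻¹ (g⁻¹ x)) := by
    intro x; rw [hb]; simp only [mul_inv_rev, inv_inv, Equiv.Perm.mul_apply]
  clear hb hπ
  have H : ∀ (i j : ℕ) (hi : i < m) (hj : j < m), (i + 1) % m = j →
      h ⟨i, hi⟩ = ⟨j, hj⟩ := by
    intro i j hi hj e
    apply Fin.ext
    rw [hh]; exact e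
  have Hlt : ∀ (i j : ℕ) (hi : i < m) (hj : j < m), i + 1 = j →
      h ⟨i, hi⟩ = ⟨j, hj⟩ := fun i j hi hj e =>
    H i j hi hj (by rw [Nat.mod_eq_of_lt (e ▸ hj)]; exact e)
  have em43 : m - 4 + 1 = m - 3 := by omega
  have em32 : m - 3 + 1 = m - 2 := by omega
  have em21 : m - 2 + 1 = m - 1 := by omega
  have em10 : (m - 1 + 1) % m = 0 := by
    have : m - 1 + 1 = m := by omega
    rw [this, Nat.mod_self]
  have h01 : h (⟨0, l0⟩ : Fin m) = (⟨1, l1⟩ : Fin m) := Hlt 0 1 l0 l1 rfl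
  have h12 : h (⟨1, l1⟩ : Fin m) = (⟨2, l2⟩ : Fin m) := Hlt 1 2 l1 l2 rfl
  have h23 : h (⟨2, l2⟩ : Fin m) = (⟨3, l3⟩ : Fin m) := Hlt 2 3 l2 l3 rfl
  have h34 : h (⟨3, l3⟩ : Fin m) = (⟨4, l4⟩ : Fin m) := Hlt 3 4 l3 l4 rfl
  have h45 : h (⟨4, l4⟩ : Fin m) = (⟨5, l5⟩ : Fin m) := Hlt 4 5 l4 l5 rfl
  have hm4 : h (⟨m - 4, lm4⟩ : Fin m) = (⟨m - 3, lm3⟩ : Fin m) := Hlt (m-4) (m-3) lm4 lm3 em43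
  have hm3 : h (⟨m - 3, lm3⟩ : Fin m) = (⟨m - 2, lm2⟩ : Fin m) := Hlt (m-3) (m-2) lm3 lm2 em32
  have hm2 : h (⟨m - 2, lm2⟩ : Fin m) = (⟨m - 1, lm1⟩ : Fin m) := Hlt (m-2) (m-1) lm2 lm1 em21
  have hm1 : h (⟨m - 1, lm1⟩ : Fin m) = (⟨0, l0⟩ : Fin m) := H (m-1) 0 lm1 l0 em10
  have hinv : ∀ x y : Fin m, h y = x → h⁻¹ x = y := by
    intro x y e; rw [← e, ← Equiv.Perm.mul_apply, inv_mul_cancel, Equiv.Perm.one_apply]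
  have ginv : ∀ x y : Fin m, g y = x → g⁻¹ x = y := by
    intro x y e; rw [← e, ← Equiv.Perm.mul_apply, inv_mul_cancel, Equiv.Perm.one_apply]
  have i01 : h⁻¹ (⟨1, l1⟩ : Fin m) = (⟨0, l0⟩ : Fin m) := hinv _ _ h01
  have i12 : h⁻¹ (⟨2, l2⟩ : Fin m) = (⟨1, l1⟩ : Fin m) := hinv _ _ h12
  have i23 : h⁻¹ (⟨3, l3⟩ : Fin m) = (⟨2, l2⟩ : Fin m) := hinv _ _ h23
  have i34 : h⁻¹ (⟨4, l4⟩ : Fin m) = (⟨3, l3⟩ : Fin m) := hinv _ _ h34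
  have i45 : h⁻¹ (⟨5, l5⟩ : Fin m) = (⟨4, l4⟩ : Fin m) := hinv _ _ h45
  have im4 : h⁻¹ (⟨m - 3, lm3⟩ : Fin m) = (⟨m - 4, lm4⟩ : Fin m) := hinv _ _ hm4
  have im3 : h⁻¹ (⟨m - 2, lm2⟩ : Fin m) = (⟨m - 3, lm3⟩ : Fin m) := hinv _ _ hm3
  have im2 : h⁻¹ (⟨m - 1, lm1⟩ : Fin m) = (⟨m - 2, lm2⟩ : Fin m) := hinv _ _ hm2
  have im1 : h⁻¹ (⟨0, l0⟩ : Fin m) = (⟨m - 1, lm1⟩ : Fin m) := hinv _ _ hm1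
  have hg0' : g (⟨0, l0⟩ : Fin m) = (⟨2, l2⟩ : Fin m) := hg0
  have hg2' : g (⟨2, l2⟩ : Fin m) = (⟨m - 1, lm1⟩ : Fin m) := hg2
  have hgm' : g (⟨m - 1, lm1⟩ : Fin m) = (⟨0, l0⟩ : Fin m) := hgm
  have hf1 : g (⟨1, l1⟩ : Fin m) = (⟨1, l1⟩ : Fin m) := hfix1
  have hf3 : g (⟨3, l3⟩ : Fin m) = (⟨3, l3⟩ : Fin m) := hfix3
  have hf4 : g (⟨4, l4⟩ : Fin m) = (⟨4, l4⟩ : Fin m) := hfix4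
  have hf5 : g (⟨5, l5⟩ : Fin m) = (⟨5, l5⟩ : Fin m) := hfix5
  have hfm4 : g (⟨m - 4, lm4⟩ : Fin m) = (⟨m - 4, lm4⟩ : Fin m) := hfixm4
  have hfm3 : g (⟨m - 3, lm3⟩ : Fin m) = (⟨m - 3, lm3⟩ : Fin m) := hfixm3
  have hfm2 : g (⟨m - 2, lm2⟩ : Fin m) = (⟨m - 2, lm2⟩ : Fin m) := hfixm2
  have gi0 : g⁻¹ (⟨2, l2⟩ : Fin m) = (⟨0, l0⟩ : Fin m) := ginv _ _ hg0'
  have gi2 : g⁻¹ (⟨m - 1, lm1⟩ : Fin m) = (⟨2, l2⟩ : Fin m) := ginv _ _ hg2'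
  have gim : g⁻¹ (⟨0, l0⟩ : Fin m) = (⟨m - 1, lm1⟩ : Fin m) := ginv _ _ hgm'
  have gi1 : g⁻¹ (⟨1, l1⟩ : Fin m) = (⟨1, l1⟩ : Fin m) := ginv _ _ hf1
  have gi3 : g⁻¹ (⟨3, l3⟩ : Fin m) = (⟨3, l3⟩ : Fin m) := ginv _ _ hf3
  have gi4 : g⁻¹ (⟨4, l4⟩ : Fin m) = (⟨4, l4⟩ : Fin m) := ginv _ _ hf4
  have gi5 : g⁻¹ (⟨5, l5⟩ : Fin m) = (⟨5, l5⟩ : Fin m) := ginv _ _ hf5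
  have gim4 : g⁻¹ (⟨m - 4, lm4⟩ : Fin m) = (⟨m - 4, lm4⟩ : Fin m) := ginv _ _ hfm4
  have gim3 : g⁻¹ (⟨m - 3, lm3⟩ : Fin m) = (⟨m - 3, lm3⟩ : Fin m) := ginv _ _ hfm3
  have gim2 : g⁻¹ (⟨m - 2, lm2⟩ : Fin m) = (⟨m - 2, lm2⟩ : Fin m) := ginv _ _ hfm2
  have b2 : b (⟨2, l2⟩ : Fin m) = (⟨1, l1⟩ : Fin m) := by rw [bapp, gi0, h01, hf1]
  have b1 : b (⟨1, l1⟩ : Fin m) = (⟨m - 1, lm1⟩ : Fin m) := by rw [bapp, gi1, h12, hg2']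
  have bm1 : b (⟨m - 1, lm1⟩ : Fin m) = (⟨3, l3⟩ : Fin m) := by rw [bapp, gi2, h23, hf3]
  have b0 : b (⟨0, l0⟩ : Fin m) = (⟨2, l2⟩ : Fin m) := by rw [bapp, gim, hm1, hg0']
  have b3 : b (⟨3, l3⟩ : Fin m) = (⟨4, l4⟩ : Fin m) := by rw [bapp, gi3, h34, hf4]
  have b4 : b (⟨4, l4⟩ : Fin m) = (⟨5, l5⟩ : Fin m) := by rw [bapp, gi4, h45, hf5]
  have bm4 : b (⟨m - 4, lm4⟩ : Fin m) = (⟨m - 3, lm3⟩ : Fin m) := by rw [bapp, gim4, hm4, hfm3]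
  have bm3 : b (⟨m - 3, lm3⟩ : Fin m) = (⟨m - 2, lm2⟩ : Fin m) := by rw [bapp, gim3, hm3, hfm2]
  have bm2 : b (⟨m - 2, lm2⟩ : Fin m) = (⟨0, l0⟩ : Fin m) := by rw [bapp, gim2, hm2, hgm']
  have c1 : b⁻¹ (⟨1, l1⟩ : Fin m) = (⟨2, l2⟩ : Fin m) := by rw [binvapp, gi1, i01, hg0']
  have cm1 : b⁻¹ (⟨m - 1, lm1⟩ : Fin m) = (⟨1, l1⟩ : Fin m) := by rw [binvapp, gi2, i12, hf1]
  have c3 : b⁻¹ (⟨3, l3⟩ : Fin m) = (⟨m - 1, lm1⟩ : Fin m) := by rw [binvapp, gi3, i23, hg2']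
  have c2 : b⁻¹ (⟨2, l2⟩ : Fin m) = (⟨0, l0⟩ : Fin m) := by rw [binvapp, gi0, im1, hgm']
  have c4 : b⁻¹ (⟨4, l4⟩ : Fin m) = (⟨3, l3⟩ : Fin m) := by rw [binvapp, gi4, i34, hf3]
  have c5 : b⁻¹ (⟨5, l5⟩ : Fin m) = (⟨4, l4⟩ : Fin m) := by rw [binvapp, gi5, i45, hf4]
  have cm3 : b⁻¹ (⟨m - 3, lm3⟩ : Fin m) = (⟨m - 4, lm4⟩ : Fin m) := by rw [binvapp, gim3, im4, hfm4]
  have cm2 : b⁻¹ (⟨m - 2, lm2⟩ : Fin m) = (⟨m - 3, lm3⟩ : Fin m) := by rw [binvapp, gim2, im3, hfm3]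
  have c0 : b⁻¹ (⟨0, l0⟩ : Fin m) = (⟨m - 2, lm2⟩ : Fin m) := by rw [binvapp, gim, im2, hfm2]
  refine ⟨?_, ?_, ?_, ?_, ?_, ?_, ?_⟩ <;>
    simp only [πapp, h01, h12, h23, h34, h45, hm4, hm3, hm2, hm1,
      i01, i12, i23, i34, i45, im4, im3, im2, im1,
      b0, b1, b2, b3, b4, bm4, bm3, bm2, bm1,
      c0, c1, c2, c3, c4, c5, cm3, cm2, cm1]
end

section
/- Let T be an αβ-graph (a finite connected directed multigraph with each edge labeled α or β, such that every vertex is incident with at least one α-edge and at least one β-edge, and for each label γ ∈ {α,β} each vertex has at most one outgoing and at most one incoming γ-edge, a loop counting as one incoming and one outgoing edge). For γ ∈ {α,β}, the connected components of the subgraph T_γ of γ-edges are γ-loops, directed γ-cycles, or maximal directed γ-paths; let l_γ(T) be the number of γ-loops and p_γ(T) the number of γ-paths plus γ-cycles. Then p_α(T) + p_β(T) + l_α(T) + l_β(T) ≤ |V(T)| + 1. -/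
/-- An αβ-graph: a finite connected directed graph with edges labelled α
(`Ea`) or β (`Eb`), possibly with loops, such that every vertex is incident
with at least one edge of each label, and for each label every vertex has at
most one outgoing and at most one incoming edge with that label. -/
structure ABGraph (V : Type) [Fintype V] where
  Ea : V → V → Prop
  Eb : V → V → Prop
  Ea_out : ∀ u v w, Ea u v → Ea u w → v = w
  Ea_in : ∀ u v w, Ea u w → Ea v w → u = v
  Eb_out : ∀ u v w, Eb u v → Eb u w → v = w
  Eb_in : ∀ u v w, Eb u w → Eb v w → u = v
  Ea_incident : ∀ v, ∃ w, Ea v w ∨ Ea w v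
  Eb_incident : ∀ v, ∃ w, Eb v w ∨ Eb w v
  connected : ∀ u v : V, Relation.ReflTransGen
    (fun x y => Ea x y ∨ Ea y x ∨ Eb x y ∨ Eb y x) u v

variable {V : Type} [Fintype V]

/-- The γ-labelled edge relation, γ encoded as a `Bool` (`true` = α). -/
def ABGraph.Edge (G : ABGraph V) (γ : Bool) : V → V → Prop :=
  fun u v => if γ then G.Ea u v else G.Eb u v

/-- The number of γ-loops of `G`. -/
noncomputable def ABGraph.loops (G : ABGraph V) (γ : Bool) : ℕ :=
  Nat.card {v : V // G.Edge γ v v}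

/-- The number of connected components of the subgraph `T_γ`; every such
component is a γ-loop, a γ-cycle or a γ-path, so this number equals
`l_γ(T) + p_γ(T)`. -/
noncomputable def ABGraph.comps (G : ABGraph V) (γ : Bool) : ℕ :=
  Nat.card (Quot (G.Edge γ))

/-- The number of γ-paths plus γ-cycles of `G`. -/
noncomputable def ABGraph.pathsCycles (G : ABGraph V) (γ : Bool) : ℕ :=
  G.comps γ - G.loops γ

/-- Auxiliary: each loop vertex is its own component, so #loops ≤ #components. -/
lemma ab_loops_le_comps (r : V → V → Prop)
    (hout : ∀ u v w, r u v → r u w → v = w)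
    (hin : ∀ u v w, r u w → r v w → u = v) :
    Nat.card {v : V // r v v} ≤ Nat.card (Quot r) := by
  have key : ∀ (v : V), r v v → ∀ x y, Relation.EqvGen r x y → (x = v ↔ y = v) := by
    intro v hv x y h
    induction h with
    | rel a b hab =>
        constructor
        · rintro rfl; exact (hout _ _ _ hv hab).symm
        · rintro rfl; exact hin _ _ _ hab hv
    | refl a => exact Iff.rfl
    | symm a b _ ih => exact ih.symm
    | trans a b c _ _ ih1 ih2 => exact ih1.trans ih2
  have hinj : Function.Injective (fun v : {v : V // r v v} => Quot.mk r v.1) := by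
    rintro ⟨a, ha⟩ ⟨b, hb⟩ h
    have : Relation.EqvGen r a b := Quot.eq.mp h
    exact Subtype.ext (((key b hb a b this).mpr rfl))
  exact Nat.card_le_card_of_injective _ hinj

set_option maxHeartbeats 1000000 in
open Classical in
/-- Key abstract lemma: if the union of two relations (symmetrized) connects a
finite type, then the numbers of classes of the two quotients sum to at most
`card V + 1`. -/
lemma ab_key (r s : V → V → Prop)
    (hconn : ∀ u v : V, Relation.ReflTransGen
      (fun x y => r x y ∨ r y x ∨ s x y ∨ s y x) u v) :
    Nat.card (Quot r) + Nat.card (Quot s) ≤ Fintype.card V + 1 := by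
  rcases isEmpty_or_nonempty V with hV | hV
  · have h1 : IsEmpty (Quot r) := ⟨Quot.ind (β := fun _ => False) isEmptyElim⟩
    have h2 : IsEmpty (Quot s) := ⟨Quot.ind (β := fun _ => False) isEmptyElim⟩
    simp [Nat.card_of_isEmpty]
  -- the bipartite "component" graph
  let H : SimpleGraph (Quot r ⊕ Quot s) :=
    { Adj := fun w1 w2 => ∃ v : V,
        (w1 = Sum.inl (Quot.mk r v) ∧ w2 = Sum.inr (Quot.mk s v)) ∨
        (w2 = Sum.inl (Quot.mk r v) ∧ w1 = Sum.inr (Quot.mk s v))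
      symm := ⟨by rintro w1 w2 ⟨v, h | h⟩; exacts [⟨v, Or.inr h⟩, ⟨v, Or.inl h⟩]⟩
      loopless := ⟨by
        rintro w ⟨v, ⟨h1, h2⟩ | ⟨h1, h2⟩⟩ <;> rw [h1] at h2 <;> exact Sum.inl_ne_inr h2⟩ }
  have hadj : ∀ v : V, H.Adj (Sum.inl (Quot.mk r v)) (Sum.inr (Quot.mk s v)) :=
    fun v => ⟨v, Or.inl ⟨rfl, rfl⟩⟩
  have hreach : ∀ u v : V,
      H.Reachable (Sum.inl (Quot.mk r u)) (Sum.inl (Quot.mk r v)) := by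
    intro u v
    induction hconn u v with
    | refl => rfl
    | @tail b c _ hbc ih =>
        refine ih.trans ?_
        rcases hbc with h | h | h | h
        · rw [Quot.sound h]
        · rw [Quot.sound h]
        · exact (hadj b).reachable.trans
            (by rw [Quot.sound h]; exact (hadj c).symm.reachable)
        · exact (hadj b).reachable.trans
            (by rw [show Quot.mk s b = Quot.mk s c from (Quot.sound h).symm]
                exact (hadj c).symm.reachable)
  haveI : Nonempty (Quot r ⊕ Quot s) := ⟨Sum.inl (Quot.mk r hV.some)⟩
  have hHconn : H.Connected := by
    refine SimpleGraph.Connected.mk ?_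
    have reach_lr : ∀ (u v : V),
        H.Reachable (Sum.inl (Quot.mk r u)) (Sum.inr (Quot.mk s v)) :=
      fun u v => (hreach u v).trans (hadj v).reachable
    rintro (a | a) (b | b)
    · obtain ⟨u, rfl⟩ := Quot.exists_rep a; obtain ⟨v, rfl⟩ := Quot.exists_rep b
      exact hreach u v
    · obtain ⟨u, rfl⟩ := Quot.exists_rep a; obtain ⟨v, rfl⟩ := Quot.exists_rep b
      exact reach_lr u v
    · obtain ⟨u, rfl⟩ := Quot.exists_rep a; obtain ⟨v, rfl⟩ := Quot.exists_rep b
      exact (reach_lr v u).symm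
    · obtain ⟨u, rfl⟩ := Quot.exists_rep a; obtain ⟨v, rfl⟩ := Quot.exists_rep b
      exact ((hadj u).symm.reachable).trans (reach_lr u v)
  -- distance argument: injective map from non-root vertices into V
  obtain ⟨w0⟩ : Nonempty (Quot r ⊕ Quot s) := inferInstance
  have hcloser : ∀ w, w ≠ w0 → ∃ u, H.Adj w u ∧ H.dist w0 u < H.dist w0 w := by
    intro w hw
    have hd : 0 < H.dist w0 w := hHconn.pos_dist_of_ne (Ne.symm hw)
    obtain ⟨p, hp⟩ := hHconn.exists_walk_length_eq_dist w0 w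
    have hqn : ¬ p.reverse.Nil := by
      rw [SimpleGraph.Walk.nil_iff_length_eq, SimpleGraph.Walk.length_reverse, hp]
      omega
    refine ⟨p.reverse.getVert 1, p.reverse.adj_snd hqn, ?_⟩
    have hle : H.dist w0 (p.reverse.getVert 1) ≤ p.reverse.tail.length := by
      have h := SimpleGraph.dist_le p.reverse.tail.reverse
      simpa [SimpleGraph.Walk.length_reverse] using h
    have hlen : p.reverse.tail.length + 1 = p.reverse.length :=
      SimpleGraph.Walk.length_tail_add_one hqn
    have hrl : p.reverse.length = H.dist w0 w := by
      rw [SimpleGraph.Walk.length_reverse, hp]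
    omega
  have hgood : ∀ w, w ≠ w0 → ∃ v : V,
      (w = Sum.inl (Quot.mk r v) ∧ H.dist w0 (Sum.inr (Quot.mk s v)) < H.dist w0 w) ∨
      (w = Sum.inr (Quot.mk s v) ∧ H.dist w0 (Sum.inl (Quot.mk r v)) < H.dist w0 w) := by
    intro w hw
    obtain ⟨u, ⟨v, h | h⟩, hu⟩ := hcloser w hw
    · exact ⟨v, Or.inl ⟨h.1, h.2 ▸ hu⟩⟩
    · exact ⟨v, Or.inr ⟨h.2, h.1 ▸ hu⟩⟩
  let f : {w : Quot r ⊕ Quot s // w ≠ w0} → V := fun w => Classical.choose (hgood w.1 w.2)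
  have hf : Function.Injective f := by
    rintro ⟨w1, h1⟩ ⟨w2, h2⟩ hfe
    have hs1 := Classical.choose_spec (hgood w1 h1)
    have hs2 := Classical.choose_spec (hgood w2 h2)
    simp only [f] at hfe
    rw [hfe] at hs1
    ext
    by_contra hne
    rcases hs1 with ⟨e1, d1⟩ | ⟨e1, d1⟩ <;> rcases hs2 with ⟨e2, d2⟩ | ⟨e2, d2⟩
    · exact hne (e1.trans e2.symm)
    · rw [← e2] at d1; rw [← e1] at d2; omega
    · rw [← e2] at d1; rw [← e1] at d2; omega
    · exact hne (e1.trans e2.symm)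
  have hcard1 : Nat.card {w : Quot r ⊕ Quot s // w ≠ w0} ≤ Fintype.card V := by
    have h := Nat.card_le_card_of_injective f hf
    simpa [Nat.card_eq_fintype_card] using h
  have hcard2 : Nat.card (Quot r ⊕ Quot s) =
      Nat.card {w : Quot r ⊕ Quot s // w ≠ w0} + 1 := by
    haveI : Fintype (Quot r ⊕ Quot s) := Fintype.ofFinite _
    rw [Nat.card_eq_fintype_card, Nat.card_eq_fintype_card]
    have h1 : Fintype.card {w : Quot r ⊕ Quot s // w = w0} = 1 :=
      Fintype.card_subtype_eq w0
    have h2 := Fintype.card_subtype_compl (fun w : Quot r ⊕ Quot s => w = w0)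
    rw [h1] at h2
    have h3 : Fintype.card {w : Quot r ⊕ Quot s // w ≠ w0} =
        Fintype.card (Quot r ⊕ Quot s) - 1 := by
      rw [← h2]
    have hle : 1 ≤ Fintype.card (Quot r ⊕ Quot s) := Fintype.card_pos_iff.mpr ⟨w0⟩
    omega
  have hsum : Nat.card (Quot r ⊕ Quot s) = Nat.card (Quot r) + Nat.card (Quot s) :=
    Nat.card_sum
  omega

/-- p_α(T) + p_β(T) + l_α(T) + l_β(T) ≤ |V(T)| + 1. -/
theorem stmt_4 (G : ABGraph V) :
    G.pathsCycles true + G.pathsCycles false + G.loops true + G.loops false ≤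
      Fintype.card V + 1 := by
  have hEa : G.Edge true = G.Ea := by funext u v; simp [ABGraph.Edge]
  have hEb : G.Edge false = G.Eb := by funext u v; simp [ABGraph.Edge]
  have hla : G.loops true ≤ G.comps true := by
    rw [ABGraph.loops, ABGraph.comps, hEa]
    exact ab_loops_le_comps _ G.Ea_out G.Ea_in
  have hlb : G.loops false ≤ G.comps false := by
    rw [ABGraph.loops, ABGraph.comps, hEb]
    exact ab_loops_le_comps _ G.Eb_out G.Eb_in
  have hkey : G.comps true + G.comps false ≤ Fintype.card V + 1 := by
    rw [ABGraph.comps, ABGraph.comps, hEa, hEb]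
    exact ab_key G.Ea G.Eb G.connected
  rw [ABGraph.pathsCycles, ABGraph.pathsCycles]
  omega
end

section
/- Let Ω be a finite set, let a, b ∈ Sym(Ω), and let w be a reduced word in α, α^{-1}, β, β^{-1}. Suppose T₁, T₂ are αβ-trees admitting w, with fixed vertices x ∈ V(T₁) and y ∈ V(T₂), and suppose ι₁ : V(T₁) → Ω and ι₂ : V(T₂) → Ω are injections such that Tⱼ is hosted by (ιⱼ, a, b) for j = 1,2. If x·ι₁ = y·ι₂, then ι₁∘ι₂^{-1} is a label-preserving isomorphism T₁ → T₂ sending x to y; in particular if T₁ and T₂ are non-isomorphic αβ-trees then x·ι₁ ≠ y·ι₂. -/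
variable {V : Type} [Fintype V]

/-- The cyclic successor on `Fin k`. -/
def cyc {k : ℕ} (i : Fin k) : Fin k := ⟨((i : ℕ) + 1) % k, Nat.mod_lt _ i.pos⟩

/-- The source of the `i`-th step of a cycle: the data `(v, lab, dir)`
describe, for each `i : Fin k`, an edge with label `lab i` joining `v i` and
`v (cyc i)`, traversed forwards (`dir i = true`, the edge runs from `v i` to
`v (cyc i)`) or backwards. -/
def src {k : ℕ} (v : Fin k → V) (dir : Fin k → Bool) (i : Fin k) : V :=
  if dir i then v i else v (cyc i)

def tgt {k : ℕ} (v : Fin k → V) (dir : Fin k → Bool) (i : Fin k) : V :=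
  if dir i then v (cyc i) else v i

/-- `(v, lab, dir)` is an undirected cycle of `G`: distinct vertices
`v 0, …, v (k-1)`, consecutive ones joined by edges (traversed in either
direction and with either label), with no edge used twice. -/
def ABGraph.IsUCycle (G : ABGraph V) {k : ℕ} (v : Fin k → V)
    (lab dir : Fin k → Bool) : Prop :=
  0 < k ∧ Function.Injective v ∧
  (∀ i : Fin k, G.Edge (lab i) (src v dir i) (tgt v dir i)) ∧
  (∀ i j : Fin k, i ≠ j →
    (lab i, src v dir i, tgt v dir i) ≠ (lab j, src v dir j, tgt v dir j))

/-- An αβ-tree: an αβ-graph all of whose undirected cycles are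
monochromatic. -/
def ABGraph.IsABTree (G : ABGraph V) : Prop :=
  ∀ (k : ℕ) (v : Fin k → V) (lab dir : Fin k → Bool),
    G.IsUCycle v lab dir → ∀ i j : Fin k, lab i = lab j

/-- A letter of a word: `(γ, e)` with `γ : Bool` the symbol (`true` = α,
`false` = β) and `e : Bool` the exponent (`true` = +1, `false` = −1). -/
abbrev Letter := Bool × Bool

/-- A word is reduced if no letter is immediately followed by its inverse. -/
def ReducedWord (w : List Letter) : Prop :=
  w.Chain' (fun p q => ¬(p.1 = q.1 ∧ p.2 ≠ q.2))

/-- One step of a trace: traversing, from `x` to `y`, the edge with label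
`p.1`, forwards if `p.2 = true` and backwards otherwise. -/
def ABGraph.Step {V : Type} [Fintype V] (G : ABGraph V) (p : Letter)
    (x y : V) : Prop :=
  if p.2 then G.Edge p.1 x y else G.Edge p.1 y x

/-- `G` admits the word `w` with fixed vertex `x`: starting at `x` and
tracing the letters of `w` we visit all vertices and all edges of `G` and
return to `x`. -/
def ABGraph.AdmitsAt {V : Type} [Fintype V] (G : ABGraph V)
    (w : List Letter) (x : V) : Prop :=
  ∃ t : Fin (w.length + 1) → V,
    t 0 = x ∧ t (Fin.last w.length) = x ∧
    (∀ i : Fin w.length, G.Step (w.get i) (t i.castSucc) (t i.succ)) ∧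
    (∀ v : V, ∃ i, t i = v) ∧
    (∀ (γ : Bool) (u v : V), G.Edge γ u v → ∃ i : Fin w.length,
      (w.get i).1 = γ ∧
      (if (w.get i).2 then t i.castSucc = u ∧ t i.succ = v
       else t i.castSucc = v ∧ t i.succ = u))

/-- `G` is hosted by `(ι, a, b)`: `ι` is injective, intertwines α-edges with
`a` and β-edges with `b`. -/
def ABGraph.Hosts {V Ω : Type} [Fintype V] (G : ABGraph V) (ι : V → Ω)
    (a b : Equiv.Perm Ω) : Prop :=
  Function.Injective ι ∧ (∀ u v, G.Ea u v → a (ι u) = ι v) ∧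
    (∀ u v, G.Eb u v → b (ι u) = ι v)

/-- A label-preserving isomorphism of αβ-graphs. -/
def ABIso {V₁ V₂ : Type} [Fintype V₁] [Fintype V₂] (G₁ : ABGraph V₁)
    (G₂ : ABGraph V₂) (φ : V₁ ≃ V₂) : Prop :=
  (∀ u v, G₁.Ea u v ↔ G₂.Ea (φ u) (φ v)) ∧
  (∀ u v, G₁.Eb u v ↔ G₂.Eb (φ u) (φ v))

/-- if αβ-trees `G₁`, `G₂` admit the reduced word `w` with
fixed vertices `x`, `y`, are hosted by `(ι₁,a,b)`, `(ι₂,a,b)` respectively,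
and `ι₁ x = ι₂ y`, then `ι₁ ∘ ι₂⁻¹` is a label-preserving isomorphism
`G₁ → G₂` sending `x` to `y`; in particular non-isomorphic trees cannot give
rise to a common point. -/
theorem stmt_12 {Ω V₁ V₂ : Type} [Fintype Ω] [Fintype V₁] [Fintype V₂]
    (a b : Equiv.Perm Ω) (w : List Letter) (hw : ReducedWord w)
    (G₁ : ABGraph V₁) (G₂ : ABGraph V₂)
    (ht₁ : G₁.IsABTree) (ht₂ : G₂.IsABTree)
    (x : V₁) (y : V₂) (hx : G₁.AdmitsAt w x) (hy : G₂.AdmitsAt w y)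
    (ι₁ : V₁ → Ω) (ι₂ : V₂ → Ω)
    (hι₁ : G₁.Hosts ι₁ a b) (hι₂ : G₂.Hosts ι₂ a b)
    (heq : ι₁ x = ι₂ y) :
    ∃ φ : V₁ ≃ V₂, ABIso G₁ G₂ φ ∧ φ x = y ∧ ∀ v, ι₂ (φ v) = ι₁ v := by
  classical
  obtain ⟨hinj₁, hA₁, hB₁⟩ := hι₁
  obtain ⟨hinj₂, hA₂, hB₂⟩ := hι₂
  obtain ⟨t₁, ht0₁, htl₁, hs₁, hsurj₁, hcov₁⟩ := hx
  obtain ⟨t₂, ht0₂, htl₂, hs₂, hsurj₂, hcov₂⟩ := hy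
  -- the images of the two traces agree
  have key : ∀ i : Fin (w.length + 1), ι₁ (t₁ i) = ι₂ (t₂ i) := by
    intro i
    induction i using Fin.induction with
    | zero => rw [ht0₁, ht0₂]; exact heq
    | succ i ih =>
      have h1 := hs₁ i
      have h2 := hs₂ i
      unfold ABGraph.Step ABGraph.Edge at h1 h2
      rcases hp : w.get i with ⟨γ, e⟩
      rw [hp] at h1 h2
      cases γ <;> cases e <;> simp only [if_true, if_false, Bool.false_eq_true,
        ite_true, ite_false] at h1 h2
      · exact b.injective (by rw [hB₁ _ _ h1, hB₂ _ _ h2, ih])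
      · rw [← hB₁ _ _ h1, ← hB₂ _ _ h2, ih]
      · exact a.injective (by rw [hA₁ _ _ h1, hA₂ _ _ h2, ih])
      · rw [← hA₁ _ _ h1, ← hA₂ _ _ h2, ih]
  -- define the maps
  let f : V₁ → V₂ := fun v => t₂ (hsurj₁ v).choose
  let g : V₂ → V₁ := fun v => t₁ (hsurj₂ v).choose
  have hf : ∀ v, ι₂ (f v) = ι₁ v := fun v =>
    (key _).symm.trans (congrArg ι₁ (hsurj₁ v).choose_spec)
  have hg : ∀ v, ι₁ (g v) = ι₂ v := fun v =>
    (key _).trans (congrArg ι₂ (hsurj₂ v).choose_spec)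
  have hgf : ∀ v, g (f v) = v := fun v => hinj₁ (by rw [hg, hf])
  have hfg : ∀ v, f (g v) = v := fun v => hinj₂ (by rw [hf, hg])
  let φ : V₁ ≃ V₂ := ⟨f, g, hgf, hfg⟩
  have edgefwd : ∀ (γ : Bool) (u v : V₁), G₁.Edge γ u v → G₂.Edge γ (f u) (f v) := by
    intro γ u v h
    obtain ⟨i, hlab, hif⟩ := hcov₁ γ u v h
    have h2 := hs₂ i
    unfold ABGraph.Step at h2
    rw [hlab] at h2
    by_cases he : (w.get i).2
    · rw [if_pos he] at hif h2
      have hu : f u = t₂ i.castSucc := hinj₂ (by rw [hf, ← hif.1, key])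
      have hv : f v = t₂ i.succ := hinj₂ (by rw [hf, ← hif.2, key])
      rw [hu, hv]; exact h2
    · rw [if_neg he] at hif h2
      have hu : f u = t₂ i.succ := hinj₂ (by rw [hf, ← hif.2, key])
      have hv : f v = t₂ i.castSucc := hinj₂ (by rw [hf, ← hif.1, key])
      rw [hu, hv]; exact h2
  have edgebwd : ∀ (γ : Bool) (u v : V₂), G₂.Edge γ u v → G₁.Edge γ (g u) (g v) := by
    intro γ u v h
    obtain ⟨i, hlab, hif⟩ := hcov₂ γ u v h
    have h1 := hs₁ i
    unfold ABGraph.Step at h1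
    rw [hlab] at h1
    by_cases he : (w.get i).2
    · rw [if_pos he] at hif h1
      have hu : g u = t₁ i.castSucc := hinj₁ (by rw [hg, ← hif.1, ← key])
      have hv : g v = t₁ i.succ := hinj₁ (by rw [hg, ← hif.2, ← key])
      rw [hu, hv]; exact h1
    · rw [if_neg he] at hif h1
      have hu : g u = t₁ i.succ := hinj₁ (by rw [hg, ← hif.2, ← key])
      have hv : g v = t₁ i.castSucc := hinj₁ (by rw [hg, ← hif.1, ← key])
      rw [hu, hv]; exact h1
  have edgeiff : ∀ (γ : Bool) (u v : V₁), G₁.Edge γ u v ↔ G₂.Edge γ (f u) (f v) := by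
    intro γ u v
    constructor
    · exact edgefwd γ u v
    · intro h
      have := edgebwd γ _ _ h
      rwa [hgf, hgf] at this
  refine ⟨φ, ⟨fun u v => ?_, fun u v => ?_⟩, hinj₂ (by rw [show ι₂ (φ x) = ι₁ x from hf x, heq]), hf⟩
  · exact (by simpa [ABGraph.Edge] using edgeiff true u v : G₁.Ea u v ↔ G₂.Ea (f u) (f v))
  · exact (by simpa [ABGraph.Edge] using edgeiff false u v : G₁.Eb u v ↔ G₂.Eb (f u) (f v))
end

section
/- Let a, b ∈ Sym(Ω), let w be a reduced word in α^{±1}, β^{±1}, and let T₁,...,T_m be pairwise non-isomorphic αβ-trees admitting w. For each j, let fixed(Tⱼ) be the number of fixed vertices of (Tⱼ, w) and let Iⱼ be a set of injections ι : V(Tⱼ) → Ω such that Tⱼ is hosted by (ι, a, b). Then the number of fixed points of the permutation w(a,b) satisfies |fix(w(a,b))| ≥ Σ_{j=1}^{m} |Iⱼ|·fixed(Tⱼ)/|Aut(Tⱼ)|. -/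
variable {V : Type} [Fintype V]

/-- The permutation `w(a,b)`: substitute `a` for α and `b` for β in `w`.
(The list is reversed because `Equiv.Perm` composes right-to-left while a word
is applied letter by letter, left to right.) -/
def wordEval {Ω : Type} (w : List Letter) (a b : Equiv.Perm Ω) :
    Equiv.Perm Ω :=
  ((w.map fun p =>
      if p.1 then (if p.2 then a else a⁻¹) else (if p.2 then b else b⁻¹)).reverse).prod

/-! ### Auxiliary lemmas -/

/-- The permutation associated to a single letter. -/
def letterPerm {Ω : Type} (a b : Equiv.Perm Ω) (p : Letter) : Equiv.Perm Ω :=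
  if p.1 then (if p.2 then a else a⁻¹) else (if p.2 then b else b⁻¹)

lemma wordEval_nil {Ω : Type} (a b : Equiv.Perm Ω) (ω : Ω) :
    wordEval [] a b ω = ω := by
  simp [wordEval]

lemma wordEval_cons {Ω : Type} (a b : Equiv.Perm Ω) (p : Letter)
    (w : List Letter) (ω : Ω) :
    wordEval (p :: w) a b ω = wordEval w a b (letterPerm a b p ω) := by
  simp only [wordEval, letterPerm, List.map_cons, List.reverse_cons,
    List.prod_append, List.prod_cons, List.prod_nil, mul_one]
  split_ifs <;> simp [Equiv.Perm.mul_apply]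

lemma step_apply {V Ω : Type} [Fintype V] {G : ABGraph V} {ι : V → Ω}
    {a b : Equiv.Perm Ω} (h : G.Hosts ι a b) {p : Letter} {x y : V}
    (hs : G.Step p x y) : letterPerm a b p (ι x) = ι y := by
  obtain ⟨-, ha, hb⟩ := h
  rcases p with ⟨γ, e⟩
  unfold ABGraph.Step ABGraph.Edge at hs
  cases γ <;> cases e <;> simp only [letterPerm, if_true, if_false,
    Bool.false_eq_true, Bool.true_eq_false] at hs ⊢
  · exact (Equiv.eq_symm_apply b).2 (hb _ _ hs) |>.symm ▸ rfl
  · exact hb _ _ hs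
  · exact (Equiv.eq_symm_apply a).2 (ha _ _ hs) |>.symm ▸ rfl
  · exact ha _ _ hs

lemma trace_eval {V Ω : Type} [Fintype V] {G : ABGraph V} {ι : V → Ω}
    {a b : Equiv.Perm Ω} (h : G.Hosts ι a b) :
    ∀ (w : List Letter) (t : ℕ → V),
      (∀ i : Fin w.length, G.Step (w.get i) (t i) (t (i + 1))) →
      wordEval w a b (ι (t 0)) = ι (t w.length)
  | [], t, _ => by simp [wordEval_nil]
  | p :: w, t, hs => by
      rw [wordEval_cons,
        show letterPerm a b p (ι (t 0)) = ι (t 1) from step_apply h (hs ⟨0, by simp⟩)]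
      have := trace_eval h w (fun i => t (i + 1)) (fun i => hs i.succ)
      simpa using this

lemma host_fixed {V Ω : Type} [Fintype V] {G : ABGraph V} {ι : V → Ω}
    {a b : Equiv.Perm Ω} {w : List Letter} {x : V}
    (h : G.Hosts ι a b) (ha : G.AdmitsAt w x) :
    wordEval w a b (ι x) = ι x := by
  obtain ⟨t, h0, hl, hs, -, -⟩ := ha
  set s : ℕ → V := fun i => if hi : i < w.length + 1 then t ⟨i, hi⟩ else x with hsdef
  have hstep : ∀ i : Fin w.length, G.Step (w.get i) (s i) (s (i + 1)) := by
    intro i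
    have e1 : s i = t i.castSucc := by
      simp only [hsdef]; rw [dif_pos (by omega)]; exact congrArg t (Fin.ext rfl)
    have e2 : s (i + 1) = t i.succ := by
      simp only [hsdef]; rw [dif_pos (by omega)]; exact congrArg t (Fin.ext rfl)
    rw [e1, e2]; exact hs i
  have := trace_eval h w s hstep
  have e0 : s 0 = x := by
    simp only [hsdef]; rw [dif_pos (by omega)]
    rw [show (⟨0, by omega⟩ : Fin (w.length + 1)) = 0 from Fin.ext rfl, h0]
  have el : s w.length = x := by
    simp only [hsdef]; rw [dif_pos (by omega)]
    rw [show (⟨w.length, by omega⟩ : Fin (w.length + 1)) = Fin.last w.length from Fin.ext rfl, hl]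
  rw [e0, el] at this
  exact this

lemma edge_true {V : Type} [Fintype V] (G : ABGraph V) (u v : V) :
    G.Edge true u v ↔ G.Ea u v := by simp [ABGraph.Edge]

lemma edge_false {V : Type} [Fintype V] (G : ABGraph V) (u v : V) :
    G.Edge false u v ↔ G.Eb u v := by simp [ABGraph.Edge]

/-- The key lemma: two hosted traces of the same word starting at the same
point of `Ω` produce a label-preserving isomorphism of the two trees. -/
lemma key_iso {V₁ V₂ Ω : Type} [Fintype V₁] [Fintype V₂]
    (G₁ : ABGraph V₁) (G₂ : ABGraph V₂) {ι₁ : V₁ → Ω} {ι₂ : V₂ → Ω}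
    {a b : Equiv.Perm Ω} {w : List Letter} {x₁ : V₁} {x₂ : V₂}
    (h₁ : G₁.Hosts ι₁ a b) (h₂ : G₂.Hosts ι₂ a b)
    (ha₁ : G₁.AdmitsAt w x₁) (ha₂ : G₂.AdmitsAt w x₂)
    (he : ι₁ x₁ = ι₂ x₂) :
    ∃ φ : V₁ ≃ V₂, ABIso G₁ G₂ φ ∧ φ x₁ = x₂ ∧ ∀ v, ι₂ (φ v) = ι₁ v := by
  obtain ⟨t₁, h10, h1l, hs₁, hv₁, hc₁⟩ := ha₁
  obtain ⟨t₂, h20, h2l, hs₂, hv₂, hc₂⟩ := ha₂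
  have hpar : ∀ i : Fin (w.length + 1), ι₁ (t₁ i) = ι₂ (t₂ i) := by
    intro i
    induction i using Fin.induction with
    | zero => rw [h10, h20, he]
    | succ i ih =>
        rw [← step_apply h₁ (hs₁ i), ← step_apply h₂ (hs₂ i), ih]
  have wd : ∀ i j : Fin (w.length + 1), t₁ i = t₁ j → t₂ i = t₂ j := by
    intro i j hij
    apply h₂.1
    rw [← hpar, ← hpar, hij]
  have wd' : ∀ i j : Fin (w.length + 1), t₂ i = t₂ j → t₁ i = t₁ j := by
    intro i j hij
    apply h₁.1
    rw [hpar, hpar, hij]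
  classical
  let φ : V₁ → V₂ := fun v => t₂ (Classical.choose (hv₁ v))
  have hφ : ∀ i, φ (t₁ i) = t₂ i :=
    fun i => wd _ _ (Classical.choose_spec (hv₁ (t₁ i)))
  let ψ : V₂ → V₁ := fun v => t₁ (Classical.choose (hv₂ v))
  have hψ : ∀ i, ψ (t₂ i) = t₁ i :=
    fun i => wd' _ _ (Classical.choose_spec (hv₂ (t₂ i)))
  have lr : ∀ v, ψ (φ v) = v := by
    intro v; obtain ⟨i, rfl⟩ := hv₁ v; rw [hφ, hψ]
  have rl : ∀ v, φ (ψ v) = v := by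
    intro v; obtain ⟨i, rfl⟩ := hv₂ v; rw [hψ, hφ]
  let e : V₁ ≃ V₂ := ⟨φ, ψ, lr, rl⟩
  have fwd : ∀ (γ : Bool) (u v : V₁), G₁.Edge γ u v → G₂.Edge γ (φ u) (φ v) := by
    intro γ u v h
    obtain ⟨i, hlab, hcond⟩ := hc₁ γ u v h
    have st := hs₂ i
    unfold ABGraph.Step at st
    by_cases hp : (w.get i).2
    · rw [if_pos hp] at hcond st
      rw [← hlab, ← hcond.1, ← hcond.2, hφ, hφ]
      exact st
    · rw [if_neg hp] at hcond st
      rw [← hlab, ← hcond.1, ← hcond.2, hφ, hφ]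
      exact st
  have bwd : ∀ (γ : Bool) (u v : V₂), G₂.Edge γ u v → G₁.Edge γ (ψ u) (ψ v) := by
    intro γ u v h
    obtain ⟨i, hlab, hcond⟩ := hc₂ γ u v h
    have st := hs₁ i
    unfold ABGraph.Step at st
    by_cases hp : (w.get i).2
    · rw [if_pos hp] at hcond st
      rw [← hlab, ← hcond.1, ← hcond.2, hψ, hψ]
      exact st
    · rw [if_neg hp] at hcond st
      rw [← hlab, ← hcond.1, ← hcond.2, hψ, hψ]
      exact st
  refine ⟨e, ⟨?_, ?_⟩, ?_, ?_⟩
  · intro u v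
    constructor
    · intro h
      exact (edge_true G₂ _ _).1 (fwd true u v ((edge_true G₁ _ _).2 h))
    · intro h
      have := bwd true _ _ ((edge_true G₂ _ _).2 h)
      rw [lr, lr] at this
      exact (edge_true G₁ _ _).1 this
  · intro u v
    constructor
    · intro h
      exact (edge_false G₂ _ _).1 (fwd false u v ((edge_false G₁ _ _).2 h))
    · intro h
      have := bwd false _ _ ((edge_false G₂ _ _).2 h)
      rw [lr, lr] at this
      exact (edge_false G₁ _ _).1 this
  · show φ x₁ = x₂
    rw [← h10, hφ, h20]
  · intro v
    obtain ⟨i, rfl⟩ := hv₁ v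
    show ι₂ (φ (t₁ i)) = ι₁ (t₁ i)
    rw [hφ]
    exact (hpar i).symm

/-- Counting lemma: the fibre of `(ι, x) ↦ ι x` over a fixed point has size
at most `|Aut|`. -/
lemma card_bound {V Ω : Type} [Fintype V] [Fintype Ω] (G : ABGraph V)
    (a b : Equiv.Perm Ω) (w : List Letter) (I : Set (V → Ω))
    (hI : ∀ ι ∈ I, G.Hosts ι a b) (F : Finset Ω)
    (hF : ∀ ω, ω ∈ F ↔ ∃ ι ∈ I, ∃ x, G.AdmitsAt w x ∧ ι x = ω) :
    Nat.card I * Nat.card {x : V // G.AdmitsAt w x} ≤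
      Nat.card {φ : V ≃ V // ABIso G G φ} * F.card := by
  classical
  have href : ∀ ω ∈ F, ∃ ι x, ι ∈ I ∧ G.AdmitsAt w x ∧ ι x = ω := by
    intro ω hω
    obtain ⟨ι, hι, x, hx, hxe⟩ := (hF ω).1 hω
    exact ⟨ι, x, hι, hx, hxe⟩
  choose ι₀ x₀ hι₀ hx₀ he₀ using href
  have hmem : ∀ p : ↥I × {x : V // G.AdmitsAt w x}, (p.1 : V → Ω) p.2 ∈ F :=
    fun p => (hF _).2 ⟨p.1, p.1.2, p.2, p.2.2, rfl⟩
  have hiso : ∀ p : ↥I × {x : V // G.AdmitsAt w x},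
      ∃ φ : V ≃ V, ABIso G G φ ∧ φ (p.2 : V) = x₀ _ (hmem p) ∧
        ∀ v, ι₀ _ (hmem p) (φ v) = (p.1 : V → Ω) v :=
    fun p => key_iso G G (hI _ p.1.2) (hI _ (hι₀ _ (hmem p))) p.2.2
      (hx₀ _ (hmem p)) (he₀ _ (hmem p)).symm
  choose Φ hΦiso hΦx hΦι using hiso
  have hinj : Function.Injective (fun p : ↥I × {x : V // G.AdmitsAt w x} =>
      ((⟨Φ p, hΦiso p⟩ : {φ : V ≃ V // ABIso G G φ}),
       (⟨(p.1 : V → Ω) p.2, hmem p⟩ : {ω : Ω // ω ∈ F}))) := by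
    intro p q h
    simp only [Prod.mk.injEq, Subtype.mk.injEq] at h
    obtain ⟨hΦ, hω⟩ := h
    have hsub : (⟨(p.1 : V → Ω) p.2, hmem p⟩ : {ω : Ω // ω ∈ F}) = ⟨(q.1 : V → Ω) q.2, hmem q⟩ :=
      Subtype.ext hω
    have hι₀eq : ι₀ ((p.1 : V → Ω) p.2) (hmem p) = ι₀ ((q.1 : V → Ω) q.2) (hmem q) :=
      congrArg (fun z : {ω : Ω // ω ∈ F} => ι₀ z.1 z.2) hsub
    have hx₀eq : x₀ ((p.1 : V → Ω) p.2) (hmem p) = x₀ ((q.1 : V → Ω) q.2) (hmem q) :=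
      congrArg (fun z : {ω : Ω // ω ∈ F} => x₀ z.1 z.2) hsub
    have hι : (p.1 : V → Ω) = (q.1 : V → Ω) := by
      funext v
      rw [← hΦι p v, ← hΦι q v, hΦ, hι₀eq]
    have hx : (p.2 : V) = (q.2 : V) := by
      apply (Φ p).injective
      rw [hΦx p, hx₀eq, ← hΦx q, hΦ]
    exact Prod.ext (Subtype.ext hι) (Subtype.ext hx)
  have hcard := Nat.card_le_card_of_injective _ hinj
  simpa [Nat.card_prod, Nat.card_eq_fintype_card, Fintype.card_coe] using hcard

/-- the fixed-point count of `w(a,b)` is bounded below by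
`Σⱼ |Iⱼ|·fixed(Tⱼ)/|Aut(Tⱼ)|`, where the `Tⱼ` are pairwise non-isomorphic
αβ-trees admitting `w`, `fixed(Tⱼ)` is the number of fixed vertices, and `Iⱼ`
is a set of injections hosting `Tⱼ`. -/
theorem stmt_13 {Ω : Type} [Fintype Ω] (a b : Equiv.Perm Ω)
    (w : List Letter) (hw : ReducedWord w)
    (m : ℕ) (Vt : Fin m → Type) [∀ j, Fintype (Vt j)]
    (G : ∀ j, ABGraph (Vt j))
    (htree : ∀ j, (G j).IsABTree)
    (hadm : ∀ j, ∃ x, (G j).AdmitsAt w x)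
    (hnoniso : ∀ j k, j ≠ k → ¬∃ φ : Vt j ≃ Vt k, ABIso (G j) (G k) φ)
    (I : ∀ j, Set (Vt j → Ω))
    (hI : ∀ j, ∀ ι ∈ I j, (G j).Hosts ι a b) :
    ∑ j : Fin m,
        (Nat.card (I j) * Nat.card {x : Vt j // (G j).AdmitsAt w x} : ℝ) /
          (Nat.card {φ : Vt j ≃ Vt j // ABIso (G j) (G j) φ}) ≤
      Nat.card {ω : Ω // wordEval w a b ω = ω} := by
  classical
  set fixSet : Finset Ω := Finset.univ.filter (fun ω => wordEval w a b ω = ω) with hfix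
  set F : Fin m → Finset Ω := fun j =>
    Finset.univ.filter (fun ω => ∃ ι ∈ I j, ∃ x, (G j).AdmitsAt w x ∧ ι x = ω) with hFdef
  have hFspec : ∀ j ω, ω ∈ F j ↔ ∃ ι ∈ I j, ∃ x, (G j).AdmitsAt w x ∧ ι x = ω := by
    intro j ω; simp [hFdef]
  have hsub : ∀ j, F j ⊆ fixSet := by
    intro j ω hω
    obtain ⟨ι, hι, x, hx, rfl⟩ := (hFspec j ω).1 hω
    simp only [hfix, Finset.mem_filter, Finset.mem_univ, true_and]
    exact host_fixed (hI j ι hι) hx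
  have hdisj : ∀ j ∈ (Finset.univ : Finset (Fin m)), ∀ k ∈ Finset.univ, j ≠ k →
      Disjoint (F j) (F k) := by
    intro j _ k _ hjk
    rw [Finset.disjoint_left]
    intro ω hωj hωk
    obtain ⟨ι₁, hι₁, x₁, hx₁, he₁⟩ := (hFspec j ω).1 hωj
    obtain ⟨ι₂, hι₂, x₂, hx₂, he₂⟩ := (hFspec k ω).1 hωk
    obtain ⟨φ, hφ, -, -⟩ := key_iso (G j) (G k) (hI j ι₁ hι₁) (hI k ι₂ hι₂) hx₁ hx₂
      (he₁.trans he₂.symm)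
    exact hnoniso j k hjk ⟨φ, hφ⟩
  have hAutpos : ∀ j, 0 < Nat.card {φ : Vt j ≃ Vt j // ABIso (G j) (G j) φ} := by
    intro j
    have : Nonempty {φ : Vt j ≃ Vt j // ABIso (G j) (G j) φ} :=
      ⟨⟨Equiv.refl _, fun u v => Iff.rfl, fun u v => Iff.rfl⟩⟩
    exact Nat.card_pos
  have hbound : ∀ j, Nat.card (I j) * Nat.card {x : Vt j // (G j).AdmitsAt w x} ≤
      Nat.card {φ : Vt j ≃ Vt j // ABIso (G j) (G j) φ} * (F j).card :=
    fun j => card_bound (G j) a b w (I j) (hI j) (F j) (hFspec j)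
  calc ∑ j : Fin m,
        (Nat.card (I j) * Nat.card {x : Vt j // (G j).AdmitsAt w x} : ℝ) /
          (Nat.card {φ : Vt j ≃ Vt j // ABIso (G j) (G j) φ})
      ≤ ∑ j : Fin m, ((F j).card : ℝ) := by
        apply Finset.sum_le_sum
        intro j _
        rw [div_le_iff₀ (by exact_mod_cast hAutpos j)]
        rw [mul_comm ((F j).card : ℝ)]
        exact_mod_cast hbound j
    _ = ((Finset.univ.biUnion F).card : ℝ) := by
        rw [Finset.card_biUnion hdisj]
        push_cast
        rfl
    _ ≤ (fixSet.card : ℝ) := by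
        have : Finset.univ.biUnion F ⊆ fixSet := by
          intro ω hω
          obtain ⟨j, -, hj⟩ := Finset.mem_biUnion.1 hω
          exact hsub j hj
        exact_mod_cast Finset.card_le_card this
    _ = (Nat.card {ω : Ω // wordEval w a b ω = ω} : ℝ) := by
        rw [Nat.card_eq_fintype_card, Fintype.card_subtype]
end
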